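/- Let (X,d) be an ultra-metric space of diameter ≤ 1, extend d to X̄ = X ∪ X⁻¹ ∪ {e} by d(x⁻¹,y⁻¹) = d(x,y) and d(x⁻¹,y) = d(x,y⁻¹) = d(x,e) = d(x⁻¹,e) = 1 for all x,y ∈ X, and let δ_u be the associated Graev ultra-metric on F(X). Then δ_u = d̂, i.e. δ_u(v,w) = d̂(v,w) for all v,w ∈ F(X). -/

import Mathlib

/-! Graev ultra-metrics on free groups (after Gao, Savchenko–Zarichnyi and
Shlossberg, "On Graev type ultra-metrics"). -/

namespace GraevStmt

variable {X : Type*}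

/-- The alphabet `X̄ = X ∪ X⁻¹ ∪ {e}`: `none` is the letter `e`,
`some (x, true)` is the letter `x` and `some (x, false)` is the letter `x⁻¹`. -/
abbrev Letter (X : Type*) := Option (X × Bool)

/-- The letter `e`. -/
def eL : Letter X := none

/-- The letter `x`, for `x ∈ X`. -/
def pos (x : X) : Letter X := some (x, true)

/-- The letter `x⁻¹`, for `x ∈ X`. -/
def neg (x : X) : Letter X := some (x, false)

/-- The formal inverse of a letter; `e⁻¹ = e` and `(x⁻¹)⁻¹ = x`. -/
def linv : Letter X → Letter X
  | none => none
  | some (x, b) => some (x, !b)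

/-- Interpretation of a letter as an element of the free group `F(X)`. -/
def toF : Letter X → FreeGroup X
  | none => 1
  | some (x, b) => FreeGroup.mk [(x, b)]

/-- The reduced word of a word `w ∈ W(X)` over the alphabet `X̄`, viewed as the
corresponding element of the free group `F(X)`. -/
def red (w : List (Letter X)) : FreeGroup X := (w.map toF).prod

/-- The canonical irreducible word over the alphabet `X̄` representing a given
element of the free group `F(X)`. -/
def wordOf [DecidableEq X] (w : FreeGroup X) : List (Letter X) :=
  w.toWord.map some

/-- `ρ_u(w, v)`: the maximum of the distances between corresponding letters of
two words of equal length. -/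
def rho (d : Letter X → Letter X → ℝ) (w v : List (Letter X)) : ℝ :=
  (List.zipWith d w v).foldr max 0

/-- The Graev ultra-metric `δ_u` on `F(X)` associated with `d`:
`δ_u(w, v) = inf {ρ_u(w*, v*) : lh(w*) = lh(v*), (w*)' = w, (v*)' = v}`. -/
noncomputable def graev (d : Letter X → Letter X → ℝ) (w v : FreeGroup X) : ℝ :=
  sInf {r : ℝ | ∃ w' v' : List (Letter X), w'.length = v'.length ∧
    red w' = w ∧ red v' = v ∧ r = rho d w' v'}

/-- `d` is an ultra-metric: symmetric, vanishing exactly on the diagonal and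
satisfying the strong triangle inequality. -/
def IsUltraMetric {A : Type*} (d : A → A → ℝ) : Prop :=
  (∀ a b, d a b = d b a) ∧ (∀ a b, d a b = 0 ↔ a = b) ∧
    ∀ a b c, d a c ≤ max (d a b) (d b c)

/-- An admissible ultra-metric on the alphabet `X̄`, i.e. an ultra-metric with
`d(x⁻¹, y⁻¹) = d(x, y)`, `d(x, e) = d(x⁻¹, e)` and `d(x⁻¹, y) = d(x, y⁻¹)`. -/
def IsAdmissible (d : Letter X → Letter X → ℝ) : Prop :=
  IsUltraMetric d ∧ (∀ x y : X, d (neg x) (neg y) = d (pos x) (pos y)) ∧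
    (∀ x : X, d (pos x) eL = d (neg x) eL) ∧
    ∀ x y : X, d (neg x) (pos y) = d (pos x) (neg y)

/-- A function `R` on `F(X) × F(X)` is (two-sided) invariant if
`R(uwv, uw'v) = R(w, w')` for all `u, v, w, w'`. -/
def IsInvariant (R : FreeGroup X → FreeGroup X → ℝ) : Prop :=
  ∀ u v w w' : FreeGroup X, R (u * w * v) (u * w' * v) = R w w'

/-- A match on `{0, …, n-1}`: an involution `θ` such that there are no
`i < j < θ(i) < θ(j)`. -/
def IsMatch {n : ℕ} (θ : Fin n → Fin n) : Prop :=
  (∀ i, θ (θ i) = i) ∧ ∀ i j : Fin n, ¬(i < j ∧ j < θ i ∧ θ i < θ j)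

/-- The word `w^θ` associated with a word `w` and a match `θ`:
its `i`-th letter is `x_i` if `θ(i) > i`, `e` if `θ(i) = i`, and
`x_{θ(i)}⁻¹` if `θ(i) < i`. -/
def matchWord (w : List (Letter X)) (θ : Fin w.length → Fin w.length) :
    List (Letter X) :=
  List.ofFn fun i => if i < θ i then w.get i
    else if θ i = i then eL else linv (w.get (θ i))

/-- `j₂(x, y) = x⁻¹y`. -/
def j2 (p : X × X) : FreeGroup X := (FreeGroup.of p.1)⁻¹ * FreeGroup.of p.2

/-- `j₂*(x, y) = xy⁻¹`. -/
def j2s (p : X × X) : FreeGroup X := FreeGroup.of p.1 * (FreeGroup.of p.2)⁻¹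

/-- `ε̃ = ⋃_{w ∈ F(X)} w (j₂(ε) ∪ j₂*(ε)) w⁻¹` for `ε ⊆ X × X`. -/
def tilde (S : Set (X × X)) : Set (FreeGroup X) :=
  ⋃ w : FreeGroup X, (fun g => w * g * w⁻¹) '' (j2 '' S ∪ j2s '' S)

/-- The extension of an ultra-metric `d` on `X` to the alphabet `X̄` determined
by a base point `x₀`: `d(x, e) = max {d(x, x₀), 1}`, `d(x⁻¹, y⁻¹) = d(x, y)`
and `d(x⁻¹, y) = d(x, y⁻¹) = max {d(x, e), d(y, e)}` for `x, y ∈ X ∪ {e}`. -/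
def ext (d : X → X → ℝ) (x₀ : X) : Letter X → Letter X → ℝ
  | none, none => 0
  | some (x, _), none => max (d x x₀) 1
  | none, some (y, _) => max (d y x₀) 1
  | some (x, true), some (y, true) => d x y
  | some (x, false), some (y, false) => d x y
  | some (x, _), some (y, _) => max (max (d x x₀) 1) (max (d y x₀) 1)

/-- The extension of an ultra-metric `d` of diameter at most `1` on `X` to the
alphabet `X̄`, with `d(x⁻¹, y⁻¹) = d(x, y)` and
`d(x⁻¹, y) = d(x, y⁻¹) = d(x, e) = d(x⁻¹, e) = 1`. -/
def extOne (d : X → X → ℝ) : Letter X → Letter X → ℝ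
  | none, none => 0
  | some (x, true), some (y, true) => d x y
  | some (x, false), some (y, false) => d x y
  | _, _ => 1

/-- The homomorphism `α : F(X) → ℤ` extending the constant map `X → {1} ⊆ ℤ`. -/
def alpha (w : FreeGroup X) : ℤ :=
  Multiplicative.toAdd ((FreeGroup.lift fun _ : X => Multiplicative.ofAdd (1 : ℤ)) w)

/-- `F(q_r) : F(X) → F(X/F_r)`, where `X/F_r` is the quotient of `X` by the
partition into open balls of radius `r` (for an ultra-metric the relation
`d x y < r` is an equivalence relation, so `Quot` of this relation is exactly
this quotient) and `q_r` is the quotient map. -/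
def Fq (d : X → X → ℝ) (r : ℝ) :
    FreeGroup X →* FreeGroup (Quot fun x y : X => d x y < r) :=
  FreeGroup.map (Quot.mk _)

/-- The Savchenko–Zarichnyi function `d̂` on `F(X) × F(X)`:
`d̂(v, w) = 1` if `α(v) ≠ α(w)`, and
`d̂(v, w) = inf {r > 0 : F(q_r)(v) = F(q_r)(w)}` if `α(v) = α(w)`. -/
noncomputable def dHat (d : X → X → ℝ) (v w : FreeGroup X) : ℝ :=
  if alpha v = alpha w then sInf {r : ℝ | 0 < r ∧ Fq d r v = Fq d r w} else 1

/-! ### Auxiliary lemmas -/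

section Aux

lemma red_nil : red ([] : List (Letter X)) = 1 := rfl

lemma red_cons (ℓ : Letter X) (t : List (Letter X)) : red (ℓ :: t) = toF ℓ * red t := by
  simp [red]

lemma red_append (A B : List (Letter X)) : red (A ++ B) = red A * red B := by
  simp [red]

lemma toF_some_not (x : X) (b : Bool) : toF (some (x, !b)) = (toF (some (x, b)))⁻¹ := by
  simp [toF, FreeGroup.inv_mk, FreeGroup.invRev]

lemma toF_linv (ℓ : Letter X) : toF (linv ℓ) = (toF ℓ)⁻¹ := by
  match ℓ with
  | none => simp [linv, toF]
  | some (x, b) => exact toF_some_not x b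

lemma red_map_some (l : List (X × Bool)) : red (l.map some) = FreeGroup.mk l := by
  induction l with
  | nil => simp [red_nil, FreeGroup.one_eq_mk]
  | cons h t ih =>
    obtain ⟨x, b⟩ := h
    rw [List.map_cons, red_cons, ih]
    show FreeGroup.mk [(x, b)] * FreeGroup.mk t = _
    rw [FreeGroup.mul_mk]
    rfl

/-- The formal inverse of a word. -/
def winv (A : List (Letter X)) : List (Letter X) := (A.map linv).reverse

lemma red_winv (A : List (Letter X)) : red (winv A) = (red A)⁻¹ := by
  induction A with
  | nil => simp [winv, red_nil]
  | cons h t ih =>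
    have h1 : winv (h :: t) = winv t ++ [linv h] := by simp [winv]
    rw [h1, red_append, ih, red_cons]
    simp [red_nil, red_cons, toF_linv, mul_inv_rev]

lemma winv_length (A : List (Letter X)) : (winv A).length = A.length := by simp [winv]

variable {d : X → X → ℝ}

lemma extOne_self (hd0 : ∀ x : X, d x x = 0) (ℓ : Letter X) : extOne d ℓ ℓ = 0 := by
  match ℓ with
  | none => rfl
  | some (x, true) => exact hd0 x
  | some (x, false) => exact hd0 x

lemma extOne_symm (hs : ∀ x y, d x y = d y x) (ℓ ℓ' : Letter X) :
    extOne d ℓ ℓ' = extOne d ℓ' ℓ := by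
  match ℓ, ℓ' with
  | none, none => rfl
  | none, some (y, b) => cases b <;> rfl
  | some (x, b), none => cases b <;> rfl
  | some (x, true), some (y, true) => exact hs x y
  | some (x, false), some (y, false) => exact hs x y
  | some (x, true), some (y, false) => rfl
  | some (x, false), some (y, true) => rfl

lemma extOne_le_one (hdiam : ∀ x y, d x y ≤ 1) (ℓ ℓ' : Letter X) :
    extOne d ℓ ℓ' ≤ 1 := by
  match ℓ, ℓ' with
  | none, none => exact zero_le_one
  | none, some (y, b) => cases b <;> exact le_refl 1
  | some (x, b), none => cases b <;> exact le_refl 1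
  | some (x, true), some (y, true) => exact hdiam x y
  | some (x, false), some (y, false) => exact hdiam x y
  | some (x, true), some (y, false) => exact le_refl 1
  | some (x, false), some (y, true) => exact le_refl 1

lemma equiv_rel (hd : IsUltraMetric d) {r : ℝ} (hr : 0 < r) :
    Equivalence (fun x y : X => d x y < r) := by
  refine ⟨fun x => ?_, fun h => ?_, fun h1 h2 => ?_⟩
  · rw [(hd.2.1 x x).mpr rfl]; exact hr
  · rwa [hd.1]
  · exact lt_of_le_of_lt (hd.2.2 _ _ _) (max_lt h1 h2)

lemma quot_exact (hd : IsUltraMetric d) {r : ℝ} (hr : 0 < r) {x y : X}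
    (h : Quot.mk (fun x y : X => d x y < r) x = Quot.mk (fun x y : X => d x y < r) y) :
    d x y < r :=
  ((equiv_rel hd hr).eqvGen_iff).mp (Quot.eqvGen_exact h)

end Aux

section ListAux

variable {α β γ : Type*}

lemma forall₂_append_split {R : α → β → Prop} :
    ∀ {l₁ l₂ : List α} {B : List β}, List.Forall₂ R (l₁ ++ l₂) B →
      ∃ B₁ B₂, B = B₁ ++ B₂ ∧ List.Forall₂ R l₁ B₁ ∧ List.Forall₂ R l₂ B₂ := by
  intro l₁
  induction l₁ with
  | nil => exact fun h => ⟨[], _, rfl, List.Forall₂.nil, h⟩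
  | cons a t ih =>
    intro l₂ B h
    rw [List.cons_append] at h
    cases h with
    | cons hab htl =>
      obtain ⟨B₁, B₂, rfl, h₁, h₂⟩ := ih htl
      exact ⟨_ :: B₁, B₂, rfl, List.Forall₂.cons hab h₁, h₂⟩

lemma map_eq_map_of_forall₂ {f : α → γ} {g : β → γ} :
    ∀ {A : List α} {B : List β}, List.Forall₂ (fun a b => f a = g b) A B →
      A.map f = B.map g := by
  intro A B h
  induction h with
  | nil => rfl
  | cons h _ ih => simp [h, ih]

lemma forall_mem_zipWith {f : α → β → ℝ} {P : ℝ → Prop} :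
    ∀ {A : List α} {B : List β}, List.Forall₂ (fun p q => P (f p q)) A B →
      ∀ z ∈ List.zipWith f A B, P z := by
  intro A B h
  induction h with
  | nil => simp
  | cons h _ ih =>
    intro z hz
    rw [List.zipWith_cons_cons] at hz
    rcases List.mem_cons.mp hz with rfl | hm
    · exact h
    · exact ih z hm

lemma forall₂_of_zipWith {f : α → β → ℝ} {P : ℝ → Prop} :
    ∀ {A : List α} {B : List β}, A.length = B.length →
      (∀ z ∈ List.zipWith f A B, P z) → List.Forall₂ (fun p q => P (f p q)) A B := by
  intro A
  induction A with
  | nil =>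
    intro B hl _
    cases B with
    | nil => exact List.Forall₂.nil
    | cons b t => simp at hl
  | cons a t ih =>
    intro B hl h
    cases B with
    | nil => simp at hl
    | cons b s =>
      refine List.Forall₂.cons (h _ (by rw [List.zipWith_cons_cons]; exact List.mem_cons_self))
        (ih (by simpa using hl) fun z hz => h z ?_)
      rw [List.zipWith_cons_cons]
      exact List.mem_cons_of_mem _ hz

lemma mem_zipWith {f : α → β → γ} :
    ∀ {A : List α} {B : List β} {z : γ}, z ∈ List.zipWith f A B → ∃ p q, z = f p q := by
  intro A
  induction A with
  | nil => intro B z hz; simp at hz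
  | cons a t ih =>
    intro B z hz
    cases B with
    | nil => simp at hz
    | cons b s =>
      rw [List.zipWith_cons_cons] at hz
      rcases List.mem_cons.mp hz with rfl | hm
      · exact ⟨a, b, rfl⟩
      · exact ih hm

lemma foldr_max_le {s : ℝ} {l : List ℝ} (hs : 0 ≤ s) (h : ∀ z ∈ l, z ≤ s) :
    l.foldr max 0 ≤ s := by
  induction l with
  | nil => simpa
  | cons a t ih =>
    simp only [List.foldr_cons]
    exact max_le (h a (by simp)) (ih fun z hz => h z (by simp [hz]))

lemma le_foldr_max {l : List ℝ} {z : ℝ} (hz : z ∈ l) : z ≤ l.foldr max 0 := by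
  induction l with
  | nil => simp at hz
  | cons a t ih =>
    rcases List.mem_cons.mp hz with rfl | hm
    · exact le_max_left _ _
    · exact le_trans (ih hm) (le_max_right _ _)

lemma foldr_max_nonneg (l : List ℝ) : 0 ≤ l.foldr max 0 := by
  induction l with
  | nil => simp
  | cons a t ih => exact le_trans ih (le_max_right _ _)

end ListAux

section Echo

variable {d : X → X → ℝ}

/-- The letter map induced by the quotient map `q_r`. -/
def qb (d : X → X → ℝ) (r : ℝ) : X × Bool → (Quot fun x y : X => d x y < r) × Bool :=
  fun p => (Quot.mk _ p.1, p.2)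

lemma lift_list (d : X → X → ℝ) (r : ℝ)
    (M : List ((Quot fun x y : X => d x y < r) × Bool)) :
    ∃ c : List (X × Bool), c.map (qb d r) = M := by
  induction M with
  | nil => exact ⟨[], rfl⟩
  | cons h t ih =>
    obtain ⟨c, hc⟩ := ih
    obtain ⟨q, b⟩ := h
    obtain ⟨x, hx⟩ := Quot.exists_rep q
    exact ⟨(x, b) :: c, by simp [qb, hx, hc]⟩

/-- The key "echo" construction: if the image of the word `a` in the free group
over `X/F_r` reduces to `M`, then for any word `c` over `X` lifting `M` there
is a word `B` over `X̄` of the same length as `a`, reducing to `mk c`, and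
letterwise at distance `< r` from `a`. -/
lemma echo (hd : IsUltraMetric d) {r : ℝ} (hr : 0 < r)
    {u M : List ((Quot fun x y : X => d x y < r) × Bool)} (h : FreeGroup.Red u M) :
    ∀ a : List (X × Bool), a.map (qb d r) = u →
    ∀ c : List (X × Bool), c.map (qb d r) = M →
    ∃ B : List (Letter X), B.length = a.length ∧ red B = FreeGroup.mk c ∧
      List.Forall₂ (fun p q => extOne d p q < r) (a.map some) B := by
  have hd0 : ∀ x : X, d x x = 0 := fun x => (hd.2.1 x x).mpr rfl
  induction h using Relation.ReflTransGen.head_induction_on with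
  | refl =>
    intro a ha c hc
    refine ⟨c.map some, ?_, red_map_some c, ?_⟩
    · have := congrArg List.length (ha.trans hc.symm)
      simpa using this.symm
    · have h0 : List.Forall₂ (fun p q => (· = ·) (qb d r p) (qb d r q)) a c := by
        rw [← List.forall₂_map_right_iff, ← List.forall₂_map_left_iff,
          List.forall₂_eq_eq_eq]
        exact ha.trans hc.symm
      rw [List.forall₂_map_right_iff, List.forall₂_map_left_iff]
      refine h0.imp ?_
      rintro ⟨x, b⟩ ⟨z, g⟩ hpq
      simp only [qb, Prod.mk.injEq] at hpq
      obtain ⟨hq, rfl⟩ := hpq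
      have hxz : d x z < r := quot_exact hd hr hq
      cases b
      · exact hxz
      · exact hxz
  | head hstep hred ih =>
    cases hstep with
    | @not L₁ L₂ ξ β =>
      intro a ha c hc
      rw [List.map_eq_append_iff] at ha
      obtain ⟨a₁, a₂, rfl, ha₁, ha₂⟩ := ha
      rw [List.map_eq_cons_iff] at ha₂
      obtain ⟨p₁, a₃, rfl, hp₁, ha₃⟩ := ha₂
      rw [List.map_eq_cons_iff] at ha₃
      obtain ⟨p₂, s, rfl, hp₂, hs⟩ := ha₃
      obtain ⟨x, β₁⟩ := p₁
      obtain ⟨y, β₂⟩ := p₂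
      simp only [qb, Prod.mk.injEq] at hp₁ hp₂
      obtain ⟨hx, rfl⟩ := hp₁
      obtain ⟨hy, rfl⟩ := hp₂
      obtain ⟨B', hlen, hredB, hfa⟩ := ih (a₁ ++ s) (by rw [List.map_append, ha₁, hs]) c hc
      rw [List.map_append] at hfa
      obtain ⟨B₁, B₂, rfl, hf₁, hf₂⟩ := forall₂_append_split hfa
      refine ⟨B₁ ++ some (x, β₁) :: some (x, !β₁) :: B₂, ?_, ?_, ?_⟩
      · have e1 : B₁.length = a₁.length := by simpa using hf₁.length_eq.symm
        have e2 : B₂.length = s.length := by simpa using hf₂.length_eq.symm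
        simp [e1, e2]
      · have : red (B₁ ++ some (x, β₁) :: some (x, !β₁) :: B₂)
            = red B₁ * (toF (some (x, β₁)) * (toF (some (x, β₁)))⁻¹) * red B₂ := by
          rw [show B₁ ++ some (x, β₁) :: some (x, !β₁) :: B₂
              = B₁ ++ ([some (x, β₁), some (x, !β₁)] ++ B₂) from rfl]
          rw [red_append, red_append, ← toF_some_not x β₁]
          simp [red, mul_assoc]
        rw [this, mul_inv_cancel, mul_one, ← red_append, hredB]
      · rw [List.map_append, List.map_cons, List.map_cons]
        refine List.rel_append hf₁ (List.Forall₂.cons ?_ (List.Forall₂.cons ?_ hf₂))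
        · have h0 : extOne d (some (x, β₁)) (some (x, β₁)) = 0 := by
            cases β₁
            · exact hd0 x
            · exact hd0 x
          rw [h0]; exact hr
        · have hyx : d y x < r := quot_exact hd hr (hy.trans hx.symm)
          cases β₁
          · exact hyx
          · exact hyx

/-- From `F(q_r)(v) = F(q_r)(w)` produce equal-length words reducing to `v`
and `w` which are letterwise at distance `< r`. -/
lemma exists_close_pair (hd : IsUltraMetric d) {r : ℝ} (hr : 0 < r) {v w : FreeGroup X}
    (h : Fq d r v = Fq d r w) :
    ∃ A B : List (Letter X), A.length = B.length ∧ red A = v ∧ red B = w ∧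
      List.Forall₂ (fun p q => extOne d p q < r) A B := by
  classical
  have hd0 : ∀ x : X, d x x = 0 := fun x => (hd.2.1 x x).mpr rfl
  set a := v.toWord with ha
  set b := w.toWord with hb
  have hv : FreeGroup.mk (a.map (qb d r)) = FreeGroup.mk (b.map (qb d r)) := by
    have h2 : Fq d r (FreeGroup.mk a) = Fq d r (FreeGroup.mk b) := by
      rw [FreeGroup.mk_toWord, FreeGroup.mk_toWord]; exact h
    simp only [Fq, FreeGroup.map.mk] at h2; exact h2
  obtain ⟨M, hra, hrb⟩ := FreeGroup.Red.exact.mp hv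
  obtain ⟨c, hc⟩ := lift_list d r M
  obtain ⟨B₁, hB₁l, hB₁r, hB₁f⟩ := echo hd hr hra a rfl c hc
  obtain ⟨B₂, hB₂l, hB₂r, hB₂f⟩ := echo hd hr hrb b rfl c hc
  refine ⟨a.map some ++ winv B₁ ++ B₂, B₁ ++ winv B₁ ++ b.map some, ?_, ?_, ?_, ?_⟩
  · simp [winv_length, hB₁l, hB₂l]
  · rw [red_append, red_append, red_map_some, red_winv, hB₁r, hB₂r,
      inv_mul_cancel_right, ha, FreeGroup.mk_toWord]
  · rw [red_append, red_append, red_winv, hB₁r, red_map_some, mul_inv_cancel,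
      one_mul, hb, FreeGroup.mk_toWord]
  · refine List.rel_append (List.rel_append hB₁f ?_) ?_
    · exact List.forall₂_same.mpr fun ℓ _ => by rw [extOne_self hd0]; exact hr
    · have h' : List.Forall₂ (flip fun p q => extOne d p q < r)
          (b.map some) B₂ :=
        hB₂f.imp fun p q hpq => show extOne d q p < r by
          rw [extOne_symm hd.1]; exact hpq
      exact List.Forall₂.flip h'
end Echo

section AlphaFq

variable {d : X → X → ℝ}

/-- `α` as a homomorphism into `Multiplicative ℤ`. -/
def alM : FreeGroup X →* Multiplicative ℤ :=
  FreeGroup.lift fun _ : X => Multiplicative.ofAdd (1 : ℤ)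

lemma alpha_eq_alM (v : FreeGroup X) : alpha v = Multiplicative.toAdd (alM v) := rfl

lemma hom_red {G : Type*} [Group G] (f : FreeGroup X →* G) (A : List (Letter X)) :
    f (red A) = (A.map fun ℓ => f (toF ℓ)).prod := by
  rw [red, MonoidHom.map_list_prod, List.map_map]
  rfl

lemma alM_toF_eq {ℓ ℓ' : Letter X} (h : extOne d ℓ ℓ' < 1) :
    alM (toF ℓ) = alM (toF ℓ') := by
  match ℓ, ℓ' with
  | none, none => rfl
  | none, some (y, b) => cases b <;> exact absurd h (lt_irrefl 1)
  | some (x, b), none => cases b <;> exact absurd h (lt_irrefl 1)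
  | some (x, true), some (y, true) =>
    show alM (FreeGroup.of x) = alM (FreeGroup.of y)
    rw [alM, FreeGroup.lift_apply_of, FreeGroup.lift_apply_of]
  | some (x, false), some (y, false) =>
    show alM (toF (some (x, !true))) = alM (toF (some (y, !true)))
    rw [toF_some_not, toF_some_not, map_inv, map_inv]
    show (alM (FreeGroup.of x))⁻¹ = (alM (FreeGroup.of y))⁻¹
    rw [alM, FreeGroup.lift_apply_of, FreeGroup.lift_apply_of]
  | some (x, true), some (y, false) => exact absurd h (lt_irrefl 1)
  | some (x, false), some (y, true) => exact absurd h (lt_irrefl 1)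

lemma alpha_red_eq {A B : List (Letter X)}
    (hfa : List.Forall₂ (fun p q => extOne d p q < 1) A B) :
    alpha (red A) = alpha (red B) := by
  rw [alpha_eq_alM, alpha_eq_alM, hom_red, hom_red,
    map_eq_map_of_forall₂ (hfa.imp fun p q hpq => alM_toF_eq hpq)]

lemma Fq_toF_eq {r : ℝ} (hd : IsUltraMetric d) (hr : 0 < r) (hr1 : r ≤ 1)
    {ℓ ℓ' : Letter X} (h : extOne d ℓ ℓ' < r) :
    Fq d r (toF ℓ) = Fq d r (toF ℓ') := by
  have habs : ¬((1 : ℝ) < r) := not_lt.mpr hr1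
  match ℓ, ℓ' with
  | none, none => rfl
  | none, some (y, b) => cases b <;> exact absurd h habs
  | some (x, b), none => cases b <;> exact absurd h habs
  | some (x, true), some (y, true) =>
    have : Quot.mk (fun x y : X => d x y < r) x = Quot.mk _ y := Quot.sound h
    show Fq d r (FreeGroup.mk [(x, true)]) = Fq d r (FreeGroup.mk [(y, true)])
    rw [Fq, FreeGroup.map.mk, FreeGroup.map.mk]
    simp [this]
  | some (x, false), some (y, false) =>
    have : Quot.mk (fun x y : X => d x y < r) x = Quot.mk _ y := Quot.sound h
    show Fq d r (FreeGroup.mk [(x, false)]) = Fq d r (FreeGroup.mk [(y, false)])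
    rw [Fq, FreeGroup.map.mk, FreeGroup.map.mk]
    simp [this]
  | some (x, true), some (y, false) => exact absurd h habs
  | some (x, false), some (y, true) => exact absurd h habs

lemma Fq_red_eq {r : ℝ} (hd : IsUltraMetric d) (hr : 0 < r) (hr1 : r ≤ 1)
    {A B : List (Letter X)}
    (hfa : List.Forall₂ (fun p q => extOne d p q < r) A B) :
    Fq d r (red A) = Fq d r (red B) := by
  rw [hom_red, hom_red,
    map_eq_map_of_forall₂ (hfa.imp fun p q hpq => Fq_toF_eq hd hr hr1 hpq)]

lemma Fq_eq_of_alpha [Nonempty X] {r : ℝ} (hdiam : ∀ x y : X, d x y ≤ 1) (hr1 : 1 < r)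
    {v w : FreeGroup X} (hal : alpha v = alpha w) : Fq d r v = Fq d r w := by
  obtain ⟨x₀⟩ := ‹Nonempty X›
  set q₀ : Quot fun x y : X => d x y < r := Quot.mk _ x₀ with hq₀
  have hsub : ∀ x : X, Quot.mk (fun x y : X => d x y < r) x = q₀ := fun x =>
    Quot.sound (lt_of_le_of_lt (hdiam x x₀) hr1)
  have hfq : Fq d r = MonoidHom.comp (zpowersHom _ (FreeGroup.of q₀)) alM := by
    apply FreeGroup.ext_hom
    intro x
    rw [Fq, FreeGroup.map.of, hsub x]
    show FreeGroup.of q₀ = zpowersHom _ (FreeGroup.of q₀) (alM (FreeGroup.of x))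
    rw [alM, FreeGroup.lift_apply_of, zpowersHom_apply]
    simp
  have : Multiplicative.toAdd (alM v) = Multiplicative.toAdd (alM w) := hal
  have halM : alM v = alM w := Multiplicative.toAdd.injective this
  rw [hfq]
  simp [MonoidHom.comp_apply, halM]

end AlphaFq


/-- Theorem `coinc`: for an ultra-metric space `(X, d)` of diameter at most
`1` and the extension `extOne d` of `d` to `X̄`, the associated Graev
ultra-metric coincides with the Savchenko–Zarichnyi ultra-metric:
`δ_u = d̂`. -/
theorem graev_eq_dHat {X : Type*} [Nonempty X]
    (d : X → X → ℝ) (hd : IsUltraMetric d) (hdiam : ∀ x y : X, d x y ≤ 1) :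
    ∀ v w : FreeGroup X, graev (extOne d) v w = dHat d v w := by
  classical
  intro v w
  set Sg : Set ℝ := {r : ℝ | ∃ w' v' : List (Letter X), w'.length = v'.length ∧
    red w' = v ∧ red v' = w ∧ r = rho (extOne d) w' v'} with hSgdef
  have hgraev : graev (extOne d) v w = sInf Sg := rfl
  set A₀ : List (Letter X) := v.toWord.map some ++
    List.replicate w.toWord.length none with hA₀
  set B₀ : List (Letter X) := List.replicate v.toWord.length (none : Letter X) ++
    w.toWord.map some with hB₀
  have hredrep : ∀ n : ℕ, red (List.replicate n (none : Letter X)) = 1 := by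
    intro n
    induction n with
    | zero => rfl
    | succ n ih => rw [List.replicate_succ, red_cons, ih]; simp [toF]
  have hs₀ : rho (extOne d) A₀ B₀ ∈ Sg := by
    refine ⟨A₀, B₀, ?_, ?_, ?_, rfl⟩
    · simp [hA₀, hB₀, Nat.add_comm]
    · rw [hA₀, red_append, red_map_some, hredrep, FreeGroup.mk_toWord, mul_one]
    · rw [hB₀, red_append, red_map_some, hredrep, FreeGroup.mk_toWord, one_mul]
  have hs₀le : rho (extOne d) A₀ B₀ ≤ 1 := by
    apply foldr_max_le zero_le_one
    intro z hz
    obtain ⟨p, q, rfl⟩ := mem_zipWith hz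
    exact extOne_le_one hdiam p q
  have hSg_ne : Sg.Nonempty := ⟨_, hs₀⟩
  have hSg_bdd : BddBelow Sg := by
    refine ⟨0, ?_⟩
    rintro s ⟨Aw, Bw, -, -, -, rfl⟩
    exact foldr_max_nonneg _
  by_cases hal : alpha v = alpha w
  · set Sd : Set ℝ := {r : ℝ | 0 < r ∧ Fq d r v = Fq d r w} with hSddef
    have hdhat : dHat d v w = sInf Sd := by rw [dHat, if_pos hal]
    have h2 : (2 : ℝ) ∈ Sd := ⟨two_pos, Fq_eq_of_alpha hdiam one_lt_two hal⟩
    have hSd_ne : Sd.Nonempty := ⟨2, h2⟩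
    have hSd_bdd : BddBelow Sd := ⟨0, fun s hs => le_of_lt hs.1⟩
    rw [hgraev, hdhat]
    apply le_antisymm
    · apply le_csInf hSd_ne
      rintro r ⟨hr, hFq⟩
      obtain ⟨A, B, hlen, hrA, hrB, hfa⟩ := exists_close_pair hd hr hFq
      have hmem : rho (extOne d) A B ∈ Sg := ⟨A, B, hlen, hrA, hrB, rfl⟩
      refine le_trans (csInf_le hSg_bdd hmem) ?_
      apply foldr_max_le hr.le
      intro z hz
      exact (forall_mem_zipWith (P := fun t => t < r) hfa z hz).le
    · apply le_csInf hSg_ne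
      rintro s ⟨A, B, hlen, hrA, hrB, rfl⟩
      have hs0 : (0 : ℝ) ≤ rho (extOne d) A B := foldr_max_nonneg _
      have hsub : Set.Ioi (rho (extOne d) A B) ⊆ Sd := by
        intro r hrmem
        rw [Set.mem_Ioi] at hrmem
        have hr : 0 < r := lt_of_le_of_lt hs0 hrmem
        refine ⟨hr, ?_⟩
        rcases le_or_gt r 1 with hr1 | hr1
        · have hfa : List.Forall₂ (fun p q => extOne d p q < r) A B := by
            apply forall₂_of_zipWith (P := fun t => t < r) hlen
            intro z hz
            exact lt_of_le_of_lt (le_foldr_max hz) hrmem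
          rw [← hrA, ← hrB]
          exact Fq_red_eq hd hr hr1 hfa
        · exact Fq_eq_of_alpha hdiam hr1 hal
      calc sInf Sd ≤ sInf (Set.Ioi (rho (extOne d) A B)) :=
             csInf_le_csInf hSd_bdd Set.nonempty_Ioi hsub
        _ = rho (extOne d) A B := csInf_Ioi
  · have hdhat : dHat d v w = 1 := by rw [dHat, if_neg hal]
    have hge : ∀ s ∈ Sg, (1 : ℝ) ≤ s := by
      rintro s ⟨A, B, hlen, hrA, hrB, rfl⟩
      by_contra hlt
      push_neg at hlt
      have hfa : List.Forall₂ (fun p q => extOne d p q < 1) A B := by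
        apply forall₂_of_zipWith (P := fun t => t < 1) hlen
        intro z hz
        exact lt_of_le_of_lt (le_foldr_max hz) hlt
      exact hal (by rw [← hrA, ← hrB]; exact alpha_red_eq hfa)
    rw [hgraev, hdhat]
    exact le_antisymm (le_trans (csInf_le hSg_bdd hs₀) hs₀le) (le_csInf hSg_ne hge)

end GraevStmt
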